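/- Let r ≥ 1 and a ∈ ℤ^{r+1} with ∑ a_i = 0, and def(a) = a + (1/(2r))(e₁ + ⋯ + e_r − r·e_{r+1}). Then a lies in the cone C(A_r^+) generated by the positive roots e_i − e_j (i < j) if and only if def(a) does. -/
import Mathlib

def posRoot (r : ℕ) (p : {q : Fin (r+1) × Fin (r+1) // q.1 < q.2}) (i : Fin (r+1)) : ℝ :=
  (if i = p.1.1 then 1 else 0) - (if i = p.1.2 then 1 else 0)

def inCone (r : ℕ) (v : Fin (r+1) → ℝ) : Prop :=
  ∃ x : {q : Fin (r+1) × Fin (r+1) // q.1 < q.2} → ℝ,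
    (∀ p, 0 ≤ x p) ∧ ∀ i, ∑ p, x p * posRoot r p i = v i

/-- partial sum of the first `k` coordinates -/
def pSum (r : ℕ) (v : Fin (r+1) → ℝ) (k : ℕ) : ℝ :=
  ∑ i : Fin (r+1), if (i : ℕ) < k then v i else 0

lemma sum_val_ite {r : ℕ} (c : ℕ) (f : Fin (r+1) → ℝ) :
    ∑ j : Fin (r+1), (if (j : ℕ) = c then f j else 0)
      = if hc : c < r+1 then f ⟨c, hc⟩ else 0 := by
  split_ifs with hc
  · rw [Finset.sum_eq_single ⟨c, hc⟩]
    · simp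
    · intro b _ hb
      rw [if_neg]
      intro h; exact hb (Fin.ext h)
    · simp
  · apply Finset.sum_eq_zero
    intro j _
    rw [if_neg]
    omega

lemma pSum_succ (r : ℕ) (v : Fin (r+1) → ℝ) (i : Fin (r+1)) :
    pSum r v ((i : ℕ) + 1) = pSum r v (i : ℕ) + v i := by
  unfold pSum
  have : ∀ j : Fin (r+1),
      (if (j : ℕ) < (i : ℕ) + 1 then v j else 0)
        = (if (j : ℕ) < (i : ℕ) then v j else 0) + (if (j : ℕ) = (i : ℕ) then v j else 0) := by
    intro j
    split_ifs <;> first | ring1 | (exfalso; omega)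
  rw [Finset.sum_congr rfl (fun j _ => this j), Finset.sum_add_distrib, sum_val_ite]
  rw [dif_pos i.isLt]

lemma pSum_zero (r : ℕ) (v : Fin (r+1) → ℝ) : pSum r v 0 = 0 := by
  simp [pSum]

lemma pSum_top (r : ℕ) (v : Fin (r+1) → ℝ) : pSum r v (r+1) = ∑ i, v i := by
  unfold pSum
  apply Finset.sum_congr rfl
  intro i _
  rw [if_pos i.isLt]


def coneAux (r : ℕ) (v : Fin (r+1) → ℝ) (i : Fin (r+1)) (q : Fin (r+1) × Fin (r+1)) : ℝ :=
  (if (q.2 : ℕ) = (q.1 : ℕ) + 1 then pSum r v (q.2 : ℕ) else 0) *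
    ((if i = q.1 then (1:ℝ) else 0) - (if i = q.2 then 1 else 0))

lemma coneAux_inner (r : ℕ) (v : Fin (r+1) → ℝ) (i q1 : Fin (r+1)) :
    ∑ b : Fin (r+1), coneAux r v i (q1, b)
      = (if (q1:ℕ) = (i:ℕ) then (if (i:ℕ) < r then pSum r v ((i:ℕ)+1) else 0) else 0)
        - (if (q1:ℕ)+1 = (i:ℕ) then pSum r v ((q1:ℕ)+1) else 0) := by
  have h1 : ∀ b : Fin (r+1), coneAux r v i (q1, b)
      = if (b:ℕ) = (q1:ℕ)+1 then
          pSum r v (b:ℕ) * ((if i = q1 then (1:ℝ) else 0) - (if i = b then 1 else 0))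
        else 0 := by
    intro b
    unfold coneAux
    rw [ite_mul, zero_mul]
  rw [Finset.sum_congr rfl (fun b _ => h1 b), sum_val_ite]
  by_cases hiq : (i:ℕ) = (q1:ℕ)
  · have hq : q1 = i := Fin.ext hiq.symm
    subst hq
    simp only [Fin.ext_iff]
    split_ifs <;> first | ring1 | (exfalso; omega) | (exfalso; simp_all)
  · by_cases h2 : (q1:ℕ)+1 = (i:ℕ)
    · simp only [Fin.ext_iff]
      split_ifs <;> first | ring1 | (exfalso; omega) | (exfalso; simp_all; omega)
    · simp only [Fin.ext_iff]
      split_ifs <;> first | ring1 | (exfalso; omega) | (exfalso; simp_all; omega)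

lemma coneAux_sum (r : ℕ) (hr : 1 ≤ r) (v : Fin (r+1) → ℝ) (hv : ∑ j, v j = 0)
    (i : Fin (r+1)) :
    ∑ q : Fin (r+1) × Fin (r+1), coneAux r v i q = v i := by
  rw [Fintype.sum_prod_type, Finset.sum_congr rfl (fun q1 _ => coneAux_inner r v i q1),
    Finset.sum_sub_distrib]
  have hA : (∑ q1 : Fin (r+1), if (q1:ℕ) = (i:ℕ) then
      (if (i:ℕ) < r then pSum r v ((i:ℕ)+1) else 0) else 0)
      = (if (i:ℕ) < r then pSum r v ((i:ℕ)+1) else 0) := by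
    rw [sum_val_ite, dif_pos i.isLt]
  have hB : (∑ q1 : Fin (r+1), if (q1:ℕ)+1 = (i:ℕ) then pSum r v ((q1:ℕ)+1) else 0)
      = (if 1 ≤ (i:ℕ) then pSum r v (i:ℕ) else 0) := by
    by_cases hi0 : 1 ≤ (i:ℕ)
    · rw [if_pos hi0]
      have hpt : ∀ q1 : Fin (r+1), (if (q1:ℕ)+1 = (i:ℕ) then pSum r v ((q1:ℕ)+1) else 0)
          = (if (q1:ℕ) = (i:ℕ)-1 then pSum r v (i:ℕ) else 0) := by
        intro q1
        by_cases hq : (q1:ℕ)+1 = (i:ℕ)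
        · rw [if_pos hq, hq, if_pos (by omega)]
        · rw [if_neg hq, if_neg (by omega)]
      rw [Finset.sum_congr rfl (fun q1 _ => hpt q1), sum_val_ite, dif_pos (by omega : (i:ℕ)-1 < r+1)]
    · rw [if_neg hi0]
      apply Finset.sum_eq_zero
      intro q1 _
      rw [if_neg (by omega)]
  rw [hA, hB]
  have key := pSum_succ r v i
  by_cases hir : (i:ℕ) < r
  · rw [if_pos hir]
    by_cases hi0 : 1 ≤ (i:ℕ)
    · rw [if_pos hi0]; linarith
    · rw [if_neg hi0]
      have h0 : (i:ℕ) = 0 := by omega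
      have : pSum r v (i:ℕ) = 0 := by rw [h0]; exact pSum_zero r v
      linarith
  · rw [if_neg hir, if_pos (by omega : 1 ≤ (i:ℕ))]
    have hir' : (i:ℕ) = r := by omega
    have htop : pSum r v ((i:ℕ)+1) = 0 := by rw [hir', pSum_top]; exact hv
    linarith

lemma inCone_iff_pSum (r : ℕ) (hr : 1 ≤ r) (v : Fin (r+1) → ℝ) (hv : ∑ i, v i = 0) :
    inCone r v ↔ ∀ k, k ≤ r → 0 ≤ pSum r v k := by
  constructor
  · rintro ⟨x, hx, hxv⟩ k _
    unfold pSum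
    have h1 : ∀ i : Fin (r+1), (if (i : ℕ) < k then v i else 0)
        = ∑ p, (if (i : ℕ) < k then x p * posRoot r p i else 0) := by
      intro i
      rw [← hxv i]
      split_ifs <;> simp
    rw [Finset.sum_congr rfl (fun i _ => h1 i), Finset.sum_comm]
    apply Finset.sum_nonneg
    intro p _
    have hab : (p.1.1 : ℕ) < (p.1.2 : ℕ) := p.2
    have hne : p.1.1 ≠ p.1.2 := Fin.ne_of_lt p.2
    have h2 : ∀ i : Fin (r+1), (if (i : ℕ) < k then x p * posRoot r p i else 0)
        = x p * ((if i = p.1.1 then (if (p.1.1 : ℕ) < k then (1:ℝ) else 0) else 0)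
            - (if i = p.1.2 then (if (p.1.2 : ℕ) < k then (1:ℝ) else 0) else 0)) := by
      intro i
      unfold posRoot
      simp only [Fin.ext_iff]
      split_ifs <;> first | ring1 | (exfalso; omega)
    rw [Finset.sum_congr rfl (fun i _ => h2 i), ← Finset.mul_sum]
    apply mul_nonneg (hx p)
    rw [Finset.sum_sub_distrib, Finset.sum_ite_eq' Finset.univ p.1.1,
      Finset.sum_ite_eq' Finset.univ p.1.2]
    simp only [Finset.mem_univ, if_true]
    split_ifs <;> first | (exfalso; omega) | norm_num
  · intro hP
    refine ⟨fun p => if ((p.1.2 : ℕ)) = (p.1.1 : ℕ) + 1 then pSum r v (p.1.2 : ℕ) else 0,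
      ?_, ?_⟩
    · intro p
      dsimp only
      split_ifs with h
      · exact hP _ (Nat.lt_succ_iff.mp p.1.2.isLt)
      · exact le_refl 0
    · intro i
      dsimp only
      have e1 : (∑ p : {q : Fin (r+1) × Fin (r+1) // q.1 < q.2},
          (if ((p : Fin (r+1) × Fin (r+1)).2 : ℕ) = ((p : Fin (r+1) × Fin (r+1)).1 : ℕ) + 1
            then pSum r v ((p : Fin (r+1) × Fin (r+1)).2 : ℕ) else 0) * posRoot r p i)
          = ∑ p : {q : Fin (r+1) × Fin (r+1) // q.1 < q.2}, coneAux r v i (p : Fin (r+1) × Fin (r+1)) := by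
        apply Finset.sum_congr rfl
        intro p _
        unfold coneAux posRoot
        rfl
      rw [e1, ← Finset.sum_subtype (Finset.univ.filter (fun q : Fin (r+1) × Fin (r+1) => q.1 < q.2))
        (by simp) (coneAux r v i)]
      rw [Finset.sum_filter_of_ne (by
        intro q _ hq
        by_contra hlt
        apply hq
        unfold coneAux
        rw [if_neg, zero_mul]
        intro hc
        exact hlt (by rw [Fin.lt_def]; omega))]
      exact coneAux_sum r hr v hv i

lemma sum_range_ite_const (k : ℕ) (c : ℝ) : ∀ n : ℕ,
    ∑ m ∈ Finset.range n, (if m < k then c else 0) = (min n k : ℕ) * c := by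
  intro n
  induction n with
  | zero => simp
  | succ n ih =>
    rw [Finset.sum_range_succ, ih]
    by_cases h : n < k
    · rw [if_pos h, show min (n+1) k = min n k + 1 by omega]
      push_cast
      ring
    · rw [if_neg h, show min (n+1) k = min n k by omega, add_zero]

/-- for `a ∈ ℤ^{r+1}` with zero sum, `a ∈ C(A_r^+)` iff
`def(a) = a + (1/(2r))(e₁ + ⋯ + e_r − r e_{r+1}) ∈ C(A_r^+)`. -/
theorem inCone_iff_deformed_inCone (r : ℕ) (hr : 1 ≤ r)
    (a : Fin (r+1) → ℤ) (hsum : ∑ i, a i = 0)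
    (defa : Fin (r+1) → ℝ)
    (hdef : ∀ i : Fin (r+1),
      defa i = (a i : ℝ) + (if i.val < r then (1 : ℝ)/(2*r) else -((r : ℝ)/(2*r)))) :
    inCone r (fun i => (a i : ℝ)) ↔ inCone r defa := by
  have hr' : (1:ℝ) ≤ (r:ℝ) := by exact_mod_cast hr
  have h2r : (0:ℝ) < 2*(r:ℝ) := by linarith
  have hva : ∑ i, ((a i : ℝ)) = 0 := by
    have h0 : ((∑ i, a i : ℤ) : ℝ) = 0 := by rw [hsum]; norm_num
    rw [← h0, Int.cast_sum]
  have hvd : ∑ i, defa i = 0 := by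
    rw [Finset.sum_congr rfl (fun i _ => hdef i), Finset.sum_add_distrib, hva, zero_add]
    rw [Fin.sum_univ_castSucc]
    simp only [Fin.coe_castSucc, Fin.val_last]
    rw [Finset.sum_congr rfl (fun i _ => if_pos i.isLt), if_neg (lt_irrefl r)]
    rw [Finset.sum_const, Finset.card_univ, Fintype.card_fin, nsmul_eq_mul]
    ring
  rw [inCone_iff_pSum r hr _ hva, inCone_iff_pSum r hr _ hvd]
  have hPd : ∀ k, k ≤ r → pSum r defa k = pSum r (fun i => (a i:ℝ)) k + (k:ℝ)/(2*(r:ℝ)) := by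
    intro k hk
    unfold pSum
    have hpt : ∀ i : Fin (r+1), (if (i:ℕ) < k then defa i else 0)
        = (if (i:ℕ) < k then ((a i:ℝ)) else 0) + (if (i:ℕ) < k then 1/(2*(r:ℝ)) else 0) := by
      intro i
      by_cases h : (i:ℕ) < k
      · rw [if_pos h, if_pos h, if_pos h, hdef i, if_pos (by omega : (i:ℕ) < r)]
      · rw [if_neg h, if_neg h, if_neg h, add_zero]
    rw [Finset.sum_congr rfl (fun i _ => hpt i), Finset.sum_add_distrib]
    congr 1
    rw [Fin.sum_univ_eq_sum_range (fun m => if m < k then 1/(2*(r:ℝ)) else 0),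
      sum_range_ite_const, show min (r+1) k = k by omega]
    ring
  have hint : ∀ k, pSum r (fun i => (a i:ℝ)) k
      = ((∑ i : Fin (r+1), if (i:ℕ) < k then a i else 0 : ℤ) : ℝ) := by
    intro k
    unfold pSum
    rw [Int.cast_sum]
    apply Finset.sum_congr rfl
    intro i _
    split_ifs <;> simp
  constructor
  · intro h k hk
    rw [hPd k hk]
    have h1 := h k hk
    have hk0 : (0:ℝ) ≤ (k:ℝ)/(2*(r:ℝ)) := by positivity
    linarith
  · intro h k hk
    have hd := h k hk
    rw [hPd k hk, hint k] at hd
    rw [hint k]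
    by_contra hneg
    push_neg at hneg
    have hS1 : (∑ i : Fin (r+1), if (i:ℕ) < k then a i else 0) ≤ -1 := by
      have : (∑ i : Fin (r+1), if (i:ℕ) < k then a i else 0) < 0 := by exact_mod_cast hneg
      omega
    have hS1' : ((∑ i : Fin (r+1), if (i:ℕ) < k then a i else 0 : ℤ) : ℝ) ≤ -1 := by
      exact_mod_cast hS1
    have hk2 : (k:ℝ)/(2*(r:ℝ)) ≤ 1/2 := by
      rw [div_le_iff₀ h2r]
      have : (k:ℝ) ≤ (r:ℝ) := by exact_mod_cast hk
      linarith
    linarith
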